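/- Every primitive countably compact Hausdorff topological inverse semigroup S embeds as a dense topological inverse subsemigroup into a primitive compact Hausdorff topological inverse semigroup. -/

import Mathlib

universe u

/-- A space is countably compact if every countable open cover has a finite
subcover. -/
def CountablyCompact (X : Type*) [TopologicalSpace X] : Prop :=
  ∀ U : ℕ → Set X, (∀ n, IsOpen (U n)) → (⋃ n, U n) = Set.univ →
    ∃ t : Finset ℕ, (⋃ n ∈ t, U n) = Set.univ

/-- `inv` is an inversion making the semigroup an inverse semigroup. -/
def InvSgrp {S : Type*} [Semigroup S] (inv : S → S) : Prop :=
  (∀ x : S, x * inv x * x = x) ∧ (∀ x : S, inv x * x * inv x = inv x) ∧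
    ∀ x y : S, x * y * x = x → y * x * y = y → y = inv x

/-!
On each cell `{y | y * inv y = α ∧ inv y * y = β}` of `S \ {0}` (an `ℋ`-class; by primitivity
`x * y ≠ 0` iff `inv x * x = y * inv y`) put the left uniformity of the group of units at `β`, and
let `0` be approached through the ideals of elements whose `𝒟`-class avoids a finite union of
`𝒟`-classes. Countable compactness of `S` gives everything needed: `𝒟`-classes are finite, these
ideals form a neighbourhood basis of `0`, each cell is totally bounded and conjugation by a whole
cell is equicontinuous. Hence the uniformity induces the topology, is totally bounded, and makes
multiplication and inversion uniformly continuous, so the completion is a compact semigroup in which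
`S` is dense. A nonzero idempotent of the completion lies in the closure of a single cell; squares
in the closure of a cell with `α ≠ β` vanish, and in the closure of a group cell the only idempotent
is its unit. So all idempotents come from `S`: they commute and are primitive, and a regular
semigroup with commuting idempotents is inverse.
-/

open Filter Topology Uniformity UniformSpace

def IsPrimitiveSemigroup (S : Type*) [SemigroupWithZero S] : Prop :=
  ∀ e : S, e ≠ 0 → IsIdempotentElem e →
    ∀ f : S, f ≠ 0 → IsIdempotentElem f → e * f = f → f * e = f → f = e

namespace InvSgrp

section Semigroup

variable {S : Type*} [Semigroup S] {inv : S → S} (h : InvSgrp inv)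
include h

theorem mul_inv_mul (x : S) : x * inv x * x = x := h.1 x

theorem inv_mul_inv (x : S) : inv x * x * inv x = inv x := h.2.1 x

theorem eq_inv_of {x y : S} (h₁ : x * y * x = x) (h₂ : y * x * y = y) : y = inv x :=
  h.2.2 x y h₁ h₂

theorem inv_inv (x : S) : inv (inv x) = x :=
  (h.eq_inv_of (h.inv_mul_inv x) (h.mul_inv_mul x)).symm

theorem inv_eq_self {e : S} (he : IsIdempotentElem e) : inv e = e :=
  (h.eq_inv_of (by rw [he.eq, he.eq]) (by rw [he.eq, he.eq])).symm

theorem isIdempotentElem_mul_inv (x : S) : IsIdempotentElem (x * inv x) := by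
  rw [IsIdempotentElem, ← mul_assoc, h.mul_inv_mul]

theorem isIdempotentElem_inv_mul (x : S) : IsIdempotentElem (inv x * x) := by
  rw [IsIdempotentElem, ← mul_assoc, h.inv_mul_inv]

/-- Vagner: `f * inv (e * f) * e` is an inverse of `e * f`, hence equals `inv (e * f)`, which
is therefore idempotent and so is its own inverse `e * f`. -/
theorem isIdempotentElem_mul {e f : S} (he : IsIdempotentElem e) (hf : IsIdempotentElem f) :
    IsIdempotentElem (e * f) := by
  set a := inv (e * f)
  have h₁ : e * f * a * (e * f) = e * f := h.mul_inv_mul _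
  have h₂ : a * (e * f) * a = a := h.inv_mul_inv _
  have hfae : f * a * e = a := by
    refine h.eq_inv_of ?_ ?_
    · calc e * f * (f * a * e) * (e * f) = e * (f * f) * a * (e * e) * f := by
            simp only [mul_assoc]
        _ = e * f * a * (e * f) := by rw [he.eq, hf.eq]; simp only [mul_assoc]
        _ = e * f := h₁
    · calc f * a * e * (e * f) * (f * a * e) = f * (a * (e * e * (f * f)) * a) * e := by
            simp only [mul_assoc]
        _ = f * a * e := by rw [he.eq, hf.eq, h₂]
  have ha : IsIdempotentElem a :=
    calc a * a = f * a * e * (f * a * e) := by rw [hfae]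
      _ = f * (a * (e * f) * a) * e := by simp only [mul_assoc]
      _ = a := by rw [h₂, hfae]
  rwa [← h.inv_inv (e * f), h.inv_eq_self ha]

theorem commute_of_isIdempotentElem {e f : S} (he : IsIdempotentElem e)
    (hf : IsIdempotentElem f) : Commute e f := by
  have hef := h.isIdempotentElem_mul he hf
  have hfe := h.isIdempotentElem_mul hf he
  have : f * e = inv (e * f) := by
    refine h.eq_inv_of ?_ ?_
    · calc e * f * (f * e) * (e * f) = e * (f * f) * (e * e) * f := by simp only [mul_assoc]
        _ = e * f * (e * f) := by rw [he.eq, hf.eq]; simp only [mul_assoc]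
        _ = e * f := hef.eq
    · calc f * e * (e * f) * (f * e) = f * (e * e) * (f * f) * e := by simp only [mul_assoc]
        _ = f * e * (f * e) := by rw [he.eq, hf.eq]; simp only [mul_assoc]
        _ = f * e := hfe.eq
  rw [Commute, SemiconjBy, this, h.inv_eq_self hef]

theorem inv_mul_rev (x y : S) : inv (x * y) = inv y * inv x := by
  have hc : y * inv y * (inv x * x) = inv x * x * (y * inv y) :=
    (h.commute_of_isIdempotentElem (h.isIdempotentElem_mul_inv y)
      (h.isIdempotentElem_inv_mul x)).eq
  refine (h.eq_inv_of ?_ ?_).symm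
  · calc x * y * (inv y * inv x) * (x * y) = x * (y * inv y * (inv x * x)) * y := by
          simp only [mul_assoc]
      _ = x * inv x * x * (y * inv y * y) := by rw [hc]; simp only [mul_assoc]
      _ = x * y := by rw [h.mul_inv_mul, h.mul_inv_mul]
  · calc inv y * inv x * (x * y) * (inv y * inv x)
          = inv y * (inv x * x * (y * inv y)) * inv x := by simp only [mul_assoc]
      _ = inv y * y * inv y * (inv x * x * inv x) := by rw [← hc]; simp only [mul_assoc]
      _ = inv y * inv x := by rw [h.inv_mul_inv, h.inv_mul_inv]

omit h in
/-- Both inverses `y` and `inv x` of `x` equal `inv x * x * y`. -/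
theorem of_commute (h₁ : ∀ x : S, x * inv x * x = x) (h₂ : ∀ x : S, inv x * x * inv x = inv x)
    (hc : ∀ e f : S, IsIdempotentElem e → IsIdempotentElem f → Commute e f) : InvSgrp inv := by
  refine ⟨h₁, h₂, fun x y hxy hyx => ?_⟩
  have idem : ∀ a b : S, a * b * a = a → IsIdempotentElem (a * b) := fun a b hab => by
    rw [IsIdempotentElem, ← mul_assoc, hab]
  have hy : y = inv x * x * y :=
    calc y = y * (x * inv x * x) * y := by rw [h₁, hyx]
      _ = y * x * (inv x * x) * y := by simp only [mul_assoc]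
      _ = inv x * x * (y * x * y) := by
          rw [(hc _ _ (idem _ _ hyx) (idem _ _ (h₂ x))).eq]; simp only [mul_assoc]
      _ = inv x * x * y := by rw [hyx]
  have hx : inv x = inv x * x * y :=
    calc inv x = inv x * (x * y * x) * inv x := by rw [hxy, h₂]
      _ = inv x * (x * y * (x * inv x)) := by simp only [mul_assoc]
      _ = inv x * x * inv x * x * y := by
          rw [(hc _ _ (idem _ _ hxy) (idem _ _ (h₁ x))).eq]; simp only [mul_assoc]
      _ = inv x * x * y := by rw [h₂]
  rw [hy, ← hx]


/-- The `ℋ`-class `R_α ∩ L_β`. -/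
def cell (inv : S → S) (α β : S) : Set S := {y | y * inv y = α ∧ inv y * y = β}

theorem mul_inv_mul_eq_of_mem_cell {α β y y' : S} (hy : y ∈ cell inv α β)
    (hy' : y' ∈ cell inv α β) : y * (inv y * y') = y' := by
  rw [← mul_assoc, hy.1, ← hy'.1, h.mul_inv_mul]

theorem mul_eq_self_of_mem_cell {α β y : S} (hy : y ∈ cell inv α β) : α * y = y := by
  rw [← hy.1, h.mul_inv_mul]

end Semigroup

section SemigroupWithZero

variable {S : Type*} [SemigroupWithZero S] {inv : S → S} (h : InvSgrp inv)
include h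

theorem inv_zero : inv (0 : S) = 0 := h.inv_eq_self IsIdempotentElem.zero

theorem mul_inv_eq_zero {x : S} : x * inv x = 0 ↔ x = 0 := by
  refine ⟨fun hx => ?_, fun hx => by rw [hx, zero_mul]⟩
  rw [← h.mul_inv_mul x, hx, zero_mul]

theorem inv_mul_eq_zero {x : S} : inv x * x = 0 ↔ x = 0 := by
  refine ⟨fun hx => ?_, fun hx => by rw [hx, mul_zero]⟩
  rw [← h.mul_inv_mul x, mul_assoc, hx, mul_zero]

theorem inv_eq_zero {x : S} : inv x = 0 ↔ x = 0 := by
  refine ⟨fun hx => ?_, fun hx => by rw [hx, h.inv_zero]⟩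
  rw [← h.mul_inv_mul x, hx, mul_zero, zero_mul]

section Primitive

variable (hp : IsPrimitiveSemigroup S)
include hp

theorem mul_eq_zero_of_isIdempotentElem {e f : S} (he₀ : e ≠ 0) (he : IsIdempotentElem e)
    (hf₀ : f ≠ 0) (hf : IsIdempotentElem f) (hne : e ≠ f) : e * f = 0 := by
  by_contra hef₀
  have hef := h.isIdempotentElem_mul he hf
  have hc := h.commute_of_isIdempotentElem he hf
  have h₁ : e * f = e :=
    hp e he₀ he _ hef₀ hef (he.mul_self_mul f) (by rw [hc.eq, mul_assoc, he.eq])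
  have h₂ : e * f = f :=
    hp f hf₀ hf _ hef₀ hef (by rw [hc.eq, hf.mul_self_mul]) (hf.mul_mul_self e)
  exact hne (h₁.symm.trans h₂)

theorem mul_ne_zero_iff {x y : S} (hx : x ≠ 0) (hy : y ≠ 0) :
    x * y ≠ 0 ↔ inv x * x = y * inv y := by
  constructor
  · intro hxy
    by_contra hne
    apply hxy
    calc x * y = x * inv x * x * (y * inv y * y) := by rw [h.mul_inv_mul, h.mul_inv_mul]
      _ = x * (inv x * x * (y * inv y)) * y := by simp only [mul_assoc]
      _ = 0 := by
          rw [h.mul_eq_zero_of_isIdempotentElem hp (h.inv_mul_eq_zero.not.2 hx)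
            (h.isIdempotentElem_inv_mul x) (h.mul_inv_eq_zero.not.2 hy)
            (h.isIdempotentElem_mul_inv y) hne, mul_zero, zero_mul]
  · intro hxy h₀
    have : x * y * (inv y * inv x) = x * inv x := by
      calc x * y * (inv y * inv x) = x * (y * inv y) * inv x := by simp only [mul_assoc]
        _ = x * inv x := by rw [← hxy, ← mul_assoc, h.mul_inv_mul]
    rw [h₀, zero_mul, eq_comm, h.mul_inv_eq_zero] at this
    exact hx this

theorem mul_mul_inv_eq {x y : S} (hxy : x * y ≠ 0) : x * y * inv (x * y) = x * inv x := by
  have hx : x ≠ 0 := by rintro rfl; exact hxy (zero_mul y)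
  refine hp _ (h.mul_inv_eq_zero.not.2 hx) (h.isIdempotentElem_mul_inv x) _
    (h.mul_inv_eq_zero.not.2 hxy) (h.isIdempotentElem_mul_inv _) ?_ ?_
  · rw [← mul_assoc, ← mul_assoc, h.mul_inv_mul]
  · rw [h.inv_mul_rev]
    calc x * y * (inv y * inv x) * (x * inv x) = x * y * inv y * (inv x * x * inv x) := by
          simp only [mul_assoc]
      _ = x * y * (inv y * inv x) := by rw [h.inv_mul_inv]; simp only [mul_assoc]

theorem inv_mul_mul_eq {x y : S} (hxy : x * y ≠ 0) : inv (x * y) * (x * y) = inv y * y := by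
  have := h.mul_mul_inv_eq hp (x := inv y) (y := inv x)
    (by rwa [← h.inv_mul_rev, Ne, h.inv_eq_zero])
  rwa [← h.inv_mul_rev, h.inv_inv, h.inv_inv] at this

end Primitive

end SemigroupWithZero

section DClosed

variable {S : Type*} [SemigroupWithZero S] {inv : S → S} {A : Set S}

/-- A union of `𝒟`-classes of nonzero idempotents: the idempotents `𝒟`-related to `inv y * y`
are the `y * inv y`. -/
structure IsDClosed (inv : S → S) (A : Set S) : Prop where
  zero_notMem : (0 : S) ∉ A
  isIdempotentElem : ∀ e ∈ A, IsIdempotentElem e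
  mul_inv_mem : ∀ y, inv y * y ∈ A → y * inv y ∈ A

theorem isDClosed_empty : IsDClosed inv ∅ :=
  ⟨Set.notMem_empty 0, fun _ he => he.elim, fun _ hy => hy.elim⟩

theorem IsDClosed.union {B : Set S} (hA : IsDClosed inv A) (hB : IsDClosed inv B) :
    IsDClosed inv (A ∪ B) where
  zero_notMem h₀ := h₀.elim hA.zero_notMem hB.zero_notMem
  isIdempotentElem e he := he.elim (hA.isIdempotentElem e) (hB.isIdempotentElem e)
  mul_inv_mem y hy := hy.imp (hA.mul_inv_mem y) (hB.mul_inv_mem y)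

theorem IsDClosed.ne_zero_of_mem (hA : IsDClosed inv A) {e : S} (he : e ∈ A) : e ≠ 0 := by
  rintro rfl
  exact hA.zero_notMem he

theorem IsDClosed.ne_zero_of_inv_mul_mem (hA : IsDClosed inv A) {y : S} (hy : inv y * y ∈ A) :
    y ≠ 0 := by
  rintro rfl
  exact hA.zero_notMem (by rwa [mul_zero] at hy)

theorem IsDClosed.mul_inv_mem_iff (hA : IsDClosed inv A) (h : InvSgrp inv) {y : S} :
    y * inv y ∈ A ↔ inv y * y ∈ A :=
  ⟨fun hy => by simpa only [h.inv_inv] using hA.mul_inv_mem (inv y) (by rwa [h.inv_inv]),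
    hA.mul_inv_mem y⟩

def idealAvoiding (inv : S → S) (A : Set S) : Set S := {y | inv y * y ∉ A}

theorem zero_mem_idealAvoiding (hA : IsDClosed inv A) :
    (0 : S) ∈ idealAvoiding inv A := by
  change inv 0 * 0 ∉ A
  rw [mul_zero]
  exact hA.zero_notMem

theorem inv_mem_idealAvoiding (h : InvSgrp inv) (hA : IsDClosed inv A) {y : S}
    (hy : y ∈ idealAvoiding inv A) : inv y ∈ idealAvoiding inv A := by
  change inv (inv y) * inv y ∉ A
  rwa [h.inv_inv, hA.mul_inv_mem_iff h]

theorem IsDClosed.idealAvoiding_union_iUnion_cell (hA : IsDClosed inv A) :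
    idealAvoiding inv A ∪ ⋃ α ∈ A, ⋃ β ∈ A, cell inv α β = Set.univ :=
  Set.eq_univ_of_forall fun y => by
    by_cases hy : inv y * y ∈ A
    · exact Or.inr (Set.mem_biUnion (hA.mul_inv_mem y hy) (Set.mem_biUnion hy ⟨rfl, rfl⟩))
    · exact Or.inl hy

theorem mul_mem_idealAvoiding_left (h : InvSgrp inv) (hp : IsPrimitiveSemigroup S)
    (hA : IsDClosed inv A) (y : S) {z : S} (hz : z ∈ idealAvoiding inv A) :
    y * z ∈ idealAvoiding inv A := by
  by_cases hyz : y * z = 0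
  · rw [hyz]; exact zero_mem_idealAvoiding hA
  · change inv (y * z) * (y * z) ∉ A
    rwa [h.inv_mul_mul_eq hp hyz]

theorem mul_mem_idealAvoiding_right (h : InvSgrp inv) (hp : IsPrimitiveSemigroup S)
    (hA : IsDClosed inv A) {y : S} (hy : y ∈ idealAvoiding inv A) (z : S) :
    y * z ∈ idealAvoiding inv A := by
  by_cases hyz : y * z = 0
  · rw [hyz]; exact zero_mem_idealAvoiding hA
  have hy₀ : y ≠ 0 := by rintro rfl; exact hyz (zero_mul z)
  have hz₀ : z ≠ 0 := by rintro rfl; exact hyz (mul_zero y)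
  change inv (y * z) * (y * z) ∉ A
  rwa [h.inv_mul_mul_eq hp hyz, ← hA.mul_inv_mem_iff h, ← (h.mul_ne_zero_iff hp hy₀ hz₀).1 hyz]

def dClass (inv : S → S) (e : S) : Set S := {f | ∃ y ≠ 0, y * inv y = e ∧ inv y * y = f}

def dSaturation (inv : S → S) (t : Set S) : Set S := ⋃ s ∈ t, dClass inv (inv s * s)

theorem isDClosed_dSaturation (h : InvSgrp inv) (hp : IsPrimitiveSemigroup S) (t : Set S) :
    IsDClosed inv (dSaturation inv t) where
  zero_notMem := by
    simp only [dSaturation, dClass, Set.mem_iUnion]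
    rintro ⟨s, -, y, hy, -, hy₀⟩
    exact hy (h.inv_mul_eq_zero.1 hy₀)
  isIdempotentElem := by
    simp only [dSaturation, dClass, Set.mem_iUnion]
    rintro e ⟨s, -, y, -, -, rfl⟩
    exact h.isIdempotentElem_inv_mul y
  mul_inv_mem := by
    simp only [dSaturation, dClass, Set.mem_iUnion]
    rintro z ⟨s, hs, y, hy, hys, hyz⟩
    have hz : z ≠ 0 := by
      rintro rfl
      rw [mul_zero, h.inv_mul_eq_zero] at hyz
      exact hy hyz
    have hyz' : y * inv z ≠ 0 := by
      rw [h.mul_ne_zero_iff hp hy (h.inv_eq_zero.not.2 hz), h.inv_inv, hyz]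
    exact ⟨s, hs, y * inv z, hyz', by rw [h.mul_mul_inv_eq hp hyz', hys],
      by rw [h.inv_mul_mul_eq hp hyz', h.inv_inv]⟩

theorem inv_mul_mem_dSaturation (h : InvSgrp inv) {s : S} {t : Set S} (hs : s ∈ t) (hs₀ : s ≠ 0) :
    inv s * s ∈ dSaturation inv t := by
  have he := h.isIdempotentElem_inv_mul s
  exact Set.mem_biUnion hs ⟨inv s * s, h.inv_mul_eq_zero.not.2 hs₀,
    by rw [h.inv_eq_self he, he.eq], by rw [h.inv_eq_self he, he.eq]⟩

end DClosed

end InvSgrp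

section Topology

variable {X Y : Type*} [TopologicalSpace X] [TopologicalSpace Y]

theorem CountablyCompact.countablyCompactSpace (hX : CountablyCompact X) :
    CountablyCompactSpace X := by
  refine ⟨isCountablyCompact_iff_countable_open_cover.2 fun U hU hcov => ?_⟩
  obtain ⟨t, ht⟩ := hX U hU (Set.univ_subset_iff.1 hcov)
  exact ⟨t, ht.ge⟩

theorem ContinuousAt.exists_mem_nhds_forall_mem {F : X × X → Y} {x : X}
    (hF : ContinuousAt F (x, x)) {O : Set Y} (hO : O ∈ 𝓝 (F (x, x))) :
    ∃ V ∈ 𝓝 x, ∀ a ∈ V, ∀ b ∈ V, F (a, b) ∈ O :=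
  eventually_prod_self_iff.1 (nhds_prod_eq (x := x) (y := x) ▸ hF.eventually_mem hO)

theorem eq_of_forall_mem_closure_image [T2Space Y] {ι : Type*} {p : ι → Prop} {s : ι → Set X}
    {a : X} (hb : (𝓝 a).HasBasis p s) {f : X → Y} (hf : ContinuousAt f a) {y : Y}
    (hy : ∀ i, p i → y ∈ closure (f '' s i)) : y = f a :=
  eq_of_nhds_neBot ((((hb.map f).clusterPt_iff_forall_mem_closure).2 hy).mono hf)

theorem MapClusterPt.exists_lt_map_mem {u : ℕ → X} {x : X} (hx : MapClusterPt x atTop u)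
    {F : X × X → Y} (hF : ContinuousAt F (x, x)) {O : Set Y} (hO : O ∈ 𝓝 (F (x, x))) :
    ∃ i j, i < j ∧ F (u i, u j) ∈ O := by
  obtain ⟨V, hV, hVO⟩ := hF.exists_mem_nhds_forall_mem hO
  have hfreq := frequently_atTop.1 (hx.frequently hV)
  obtain ⟨i, -, hi⟩ := hfreq 0
  obtain ⟨j, hij, hj⟩ := hfreq (i + 1)
  exact ⟨i, j, hij, hVO _ hi _ hj⟩

theorem IsClosed.exists_lt_map_mem [CountablyCompactSpace X] {C : Set X} (hC : IsClosed C)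
    {u : ℕ → X} (hu : ∀ n, u n ∈ C) {F : X × X → Y} (hF : Continuous F) {O : Set Y}
    (hO : ∀ x ∈ C, O ∈ 𝓝 (F (x, x))) : ∃ i j, i < j ∧ F (u i, u j) ∈ O := by
  obtain ⟨x, hxC, hx⟩ := hC.isCountablyCompact.seq_clusterPt u (Eventually.of_forall hu)
  exact hx.exists_lt_map_mem hF.continuousAt (hO x hxC)

end Topology

namespace InvSgrp

section Topology

variable {S : Type*} [SemigroupWithZero S] [TopologicalSpace S] [T1Space S] [ContinuousMul S]
  {inv : S → S}

theorem isClosed_cell (hinvc : Continuous inv) (α β : S) : IsClosed (cell inv α β) :=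
  (isClosed_singleton.preimage (continuous_id.mul hinvc)).inter
    (isClosed_singleton.preimage (hinvc.mul continuous_id))

theorem eventually_mem_cell (h : InvSgrp inv) (hp : IsPrimitiveSemigroup S) {x : S} (hx : x ≠ 0) :
    ∀ᶠ y in 𝓝 x, y ∈ cell inv (x * inv x) (inv x * x) := by
  have h₁ : ∀ᶠ y in 𝓝 x, x * inv x * y ≠ 0 :=
    (continuous_const_mul _).continuousAt.eventually_ne (by rwa [h.mul_inv_mul])
  have h₂ : ∀ᶠ y in 𝓝 x, y * (inv x * x) ≠ 0 :=
    (continuous_mul_const _).continuousAt.eventually_ne (by rwa [← mul_assoc, h.mul_inv_mul])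
  filter_upwards [h₁, h₂] with y h₁ h₂
  have hy : y ≠ 0 := by rintro rfl; exact h₂ (zero_mul _)
  have hr := h.isIdempotentElem_mul_inv x
  have hc := h.isIdempotentElem_inv_mul x
  rw [h.mul_ne_zero_iff hp (h.mul_inv_eq_zero.not.2 hx) hy, h.inv_eq_self hr, hr.eq] at h₁
  rw [h.mul_ne_zero_iff hp hy (h.inv_mul_eq_zero.not.2 hx), h.inv_eq_self hc, hc.eq] at h₂
  exact ⟨h₁.symm, h₂⟩

theorem isOpen_idealAvoiding (hinvc : Continuous inv) {A : Set S} (hA : A.Finite) :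
    IsOpen (idealAvoiding inv A) :=
  hA.isClosed.isOpen_compl.preimage (hinvc.mul continuous_id)

variable [CountablyCompactSpace S]

theorem finite_dClass (hinvc : Continuous inv) (h : InvSgrp inv) (hp : IsPrimitiveSemigroup S)
    (e : S) : (dClass inv e).Finite := by
  by_contra hinf
  change (dClass inv e).Infinite at hinf
  have he : e ≠ 0 := by
    rintro rfl
    refine hinf (Set.finite_empty.subset ?_)
    rintro f ⟨y, hy, hye, -⟩
    exact hy (h.mul_inv_eq_zero.1 hye)
  obtain ⟨u, hu⟩ := Set.seq_of_forall_finite_exists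
      (P := fun y t => y ≠ 0 ∧ y * inv y = e ∧ inv y * y ∉ (fun s => inv s * s) '' t)
      fun t ht => by
    obtain ⟨f, ⟨y, hy, hye, rfl⟩, hf⟩ := (hinf.sdiff (ht.image _)).nonempty
    exact ⟨y, hy, hye, hf⟩
  obtain ⟨i, j, hij, hne⟩ :=
    (isClosed_singleton.preimage (continuous_id.mul hinvc) : IsClosed {y | y * inv y = e})
      |>.exists_lt_map_mem (fun n => (hu n).2.1) (F := fun p => p.1 * inv p.2) (by fun_prop)
      (O := {0}ᶜ) fun x (hx : x * inv x = e) =>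
        isOpen_compl_singleton.mem_nhds (show x * inv x ≠ 0 by rwa [hx])
  have := (h.mul_ne_zero_iff hp (hu i).1 (h.inv_eq_zero.not.2 (hu j).1)).1 hne
  rw [h.inv_inv] at this
  exact (hu j).2.2 ⟨u i, ⟨i, hij, rfl⟩, this⟩

theorem finite_dSaturation (hinvc : Continuous inv) (h : InvSgrp inv)
    (hp : IsPrimitiveSemigroup S) {t : Set S} (ht : t.Finite) : (dSaturation inv t).Finite :=
  ht.biUnion fun _ _ => finite_dClass hinvc h hp _

/-- Otherwise there are `u n ∉ N` with pairwise distinct `𝒟`-classes; near a cluster point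
`w ≠ 0` two of them satisfy `u i * inv (u j) ≠ 0`, which forces equal `𝒟`-classes. -/
theorem hasBasis_nhds_zero (hinvc : Continuous inv) (h : InvSgrp inv)
    (hp : IsPrimitiveSemigroup S) :
    (𝓝 (0 : S)).HasBasis (fun A => A.Finite ∧ IsDClosed inv A) (idealAvoiding inv) := by
  refine ⟨fun N => ⟨fun hN => ?_, fun ⟨A, ⟨hAf, hA⟩, hAN⟩ =>
    mem_of_superset ((isOpen_idealAvoiding hinvc hAf).mem_nhds (zero_mem_idealAvoiding hA)) hAN⟩⟩
  obtain ⟨U, hUN, hU, h0U⟩ := mem_nhds_iff.1 hN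
  by_contra! hno
  obtain ⟨u, hu⟩ := Set.seq_of_forall_finite_exists
      (P := fun y t => y ∉ U ∧ y ∈ idealAvoiding inv (dSaturation inv t)) fun t ht => by
    obtain ⟨y, hyA, hyN⟩ :=
      Set.not_subset.1 (hno _ ⟨finite_dSaturation hinvc h hp ht, isDClosed_dSaturation h hp t⟩)
    exact ⟨y, fun hyU => hyN (hUN hyU), hyA⟩
  have hu₀ : ∀ n, u n ≠ 0 := fun n hn => (hu n).1 (hn ▸ h0U)
  obtain ⟨i, j, hij, hne⟩ := hU.isClosed_compl.exists_lt_map_mem (fun n => (hu n).1)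
    (F := fun p => p.1 * inv p.2) (by fun_prop) (O := {0}ᶜ) fun x hx =>
      isOpen_compl_singleton.mem_nhds <| show x * inv x ≠ 0 from
        h.mul_inv_eq_zero.not.2 fun hx₀ => hx (hx₀ ▸ h0U)
  have := (h.mul_ne_zero_iff hp (hu₀ i) (h.inv_eq_zero.not.2 (hu₀ j))).1 hne
  rw [h.inv_inv] at this
  exact (hu j).2 (this ▸ inv_mul_mem_dSaturation h ⟨i, hij, rfl⟩ (hu₀ i))

theorem exists_finite_cover_cell (hinvc : Continuous inv) (α : S) {β : S} {O : Set S}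
    (hO : O ∈ 𝓝 β) :
    ∃ t : Set S, t.Finite ∧ t ⊆ cell inv α β ∧ ∀ y ∈ cell inv α β, ∃ g ∈ t, inv g * y ∈ O := by
  by_contra! hno
  obtain ⟨u, hu⟩ := Set.seq_of_forall_finite_exists
      (P := fun y t => y ∈ cell inv α β ∧ ∀ g ∈ t ∩ cell inv α β, inv g * y ∉ O) fun t ht =>
    hno _ (ht.inter_of_left _) Set.inter_subset_right
  obtain ⟨i, j, hij, hO'⟩ := (isClosed_cell hinvc α β).exists_lt_map_mem (fun n => (hu n).1)
    (F := fun p => inv p.1 * p.2) (by fun_prop) fun x hx => by simpa [hx.2] using hO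
  exact (hu j).2 (u i) ⟨⟨i, hij, rfl⟩, (hu i).1⟩ hO'

/-- Cover the cell by finitely many translates `a * V`: conjugating by `a * k` with `k ∈ V` is
conjugating by `a`, then by `k`. -/
theorem eventually_forall_mem_cell_conj_mem (hinvc : Continuous inv) (h : InvSgrp inv)
    {β γ : S} (hγ : IsIdempotentElem γ) {O : Set S} (hO : O ∈ 𝓝 γ) :
    ∀ᶠ g in 𝓝 β, ∀ z ∈ cell inv β γ, inv z * (g * z) ∈ O := by
  obtain ⟨V, hV, hVO⟩ := ContinuousAt.exists_mem_nhds_forall_mem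
    (F := fun p : S × S => inv p.1 * (p.2 * p.1)) (x := γ) (by fun_prop)
    (by simpa [h.inv_eq_self hγ, hγ.eq] using hO)
  obtain ⟨t, htf, htc, hcov⟩ := exists_finite_cover_cell hinvc β hV
  have : ∀ᶠ g in 𝓝 β, ∀ a ∈ t, inv a * (g * a) ∈ V := by
    refine htf.eventually_all.2 fun a ha => ?_
    refine (continuous_const_mul _ |>.comp (continuous_mul_const a)).continuousAt.eventually_mem ?_
    simpa [h.mul_eq_self_of_mem_cell (htc ha), (htc ha).2] using hV
  filter_upwards [this] with g hg z hz
  obtain ⟨a, hat, haz⟩ := hcov z hz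
  obtain ⟨k, hk, rfl⟩ : ∃ k ∈ V, z = a * k :=
    ⟨_, haz, (h.mul_inv_mul_eq_of_mem_cell (htc hat) hz).symm⟩
  have hconj : inv (a * k) * (g * (a * k)) = inv k * (inv a * (g * a) * k) := by
    rw [h.inv_mul_rev]; simp only [mul_assoc]
  rw [hconj]
  exact hVO _ hk _ (hg a hat)

end Topology

section Uniformity

variable {S : Type*} [SemigroupWithZero S] [TopologicalSpace S] {inv : S → S}

structure EntourageData (inv : S → S) where
  A : Set S
  finite : A.Finite
  isDClosed : IsDClosed inv A
  nhd : S → Set S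
  nhd_mem : ∀ β, IsIdempotentElem β → nhd β ∈ 𝓝 β

namespace EntourageData

instance : Nonempty (EntourageData inv) :=
  ⟨⟨∅, Set.finite_empty, isDClosed_empty, fun _ => Set.univ, fun _ _ => univ_mem⟩⟩

def toSet (d : EntourageData inv) : Set (S × S) :=
  {p | p.1 ∈ idealAvoiding inv d.A ∧ p.2 ∈ idealAvoiding inv d.A ∨
    inv p.1 * p.1 ∈ d.A ∧ p.2 ∈ cell inv (p.1 * inv p.1) (inv p.1 * p.1) ∧
      inv p.1 * p.2 ∈ d.nhd (inv p.1 * p.1)}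

variable {d : EntourageData inv} {y y' : S}

theorem mem_toSet : (y, y') ∈ d.toSet ↔
    y ∈ idealAvoiding inv d.A ∧ y' ∈ idealAvoiding inv d.A ∨
      inv y * y ∈ d.A ∧ y' ∈ cell inv (y * inv y) (inv y * y) ∧ inv y * y' ∈ d.nhd (inv y * y) :=
  Iff.rfl

theorem mem_cell_of_mem_toSet (hyy : (y, y') ∈ d.toSet) (hy : inv y * y ∈ d.A) :
    y' ∈ cell inv (y * inv y) (inv y * y) ∧ inv y * y' ∈ d.nhd (inv y * y) := by
  rcases mem_toSet.1 hyy with ⟨hy', -⟩ | ⟨-, hcell, hnhd⟩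
  exacts [absurd hy hy', ⟨hcell, hnhd⟩]

theorem mem_idealAvoiding_of_mem_toSet (hyy : (y, y') ∈ d.toSet)
    (hy : y ∈ idealAvoiding inv d.A) : y' ∈ idealAvoiding inv d.A := by
  rcases mem_toSet.1 hyy with ⟨-, hy'⟩ | ⟨hA, -⟩
  exacts [hy', absurd hA hy]

theorem toSet_subset_toSet {d' : EntourageData inv} (hA : d.A ⊆ d'.A)
    (hnhd : ∀ β ∈ d.A, d'.nhd β ⊆ d.nhd β) : d'.toSet ⊆ d.toSet := by
  rintro ⟨y, y'⟩ hyy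
  rcases mem_toSet.1 hyy with ⟨hy, hy'⟩ | ⟨-, hcell, hnhd'⟩
  · exact Or.inl ⟨fun h => hy (hA h), fun h => hy' (hA h)⟩
  · by_cases hyA : inv y * y ∈ d.A
    · exact Or.inr ⟨hyA, hcell, hnhd _ hyA hnhd'⟩
    · exact Or.inl ⟨hyA, fun h => hyA (hcell.2 ▸ h)⟩

theorem directed_toSet : Directed (· ≥ ·) (toSet : EntourageData inv → Set (S × S)) :=
  fun d₁ d₂ => ⟨⟨d₁.A ∪ d₂.A, d₁.finite.union d₂.finite, d₁.isDClosed.union d₂.isDClosed,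
      fun β => d₁.nhd β ∩ d₂.nhd β, fun β hβ => inter_mem (d₁.nhd_mem β hβ) (d₂.nhd_mem β hβ)⟩,
    toSet_subset_toSet Set.subset_union_left fun _ _ => Set.inter_subset_left,
    toSet_subset_toSet Set.subset_union_right fun _ _ => Set.inter_subset_right⟩

theorem hasBasis_iInf_toSet :
    (⨅ d : EntourageData inv, 𝓟 d.toSet).HasBasis (fun _ => True) (toSet (inv := inv)) :=
  hasBasis_iInf_principal directed_toSet

theorem exists_nhd_mul_subset [ContinuousMul S] (d : EntourageData inv) :
    ∃ V : S → Set S, ∀ β, IsIdempotentElem β →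
      V β ∈ 𝓝 β ∧ ∀ a ∈ V β, ∀ b ∈ V β, a * b ∈ d.nhd β := by
  choose! V hV hVd using fun β (hβ : IsIdempotentElem β) =>
    ContinuousAt.exists_mem_nhds_forall_mem (F := fun p : S × S => p.1 * p.2) (x := β)
      continuous_mul.continuousAt (show d.nhd β ∈ 𝓝 (β * β) by rw [hβ.eq]; exact d.nhd_mem β hβ)
  exact ⟨V, fun β hβ => ⟨hV β hβ, hVd β hβ⟩⟩

variable (h : InvSgrp inv)
include h

theorem mem_toSet_self (d : EntourageData inv) (y : S) : (y, y) ∈ d.toSet := by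
  by_cases hy : inv y * y ∈ d.A
  · exact Or.inr ⟨hy, ⟨rfl, rfl⟩, mem_of_mem_nhds (d.nhd_mem _ (h.isIdempotentElem_inv_mul y))⟩
  · exact Or.inl ⟨hy, hy⟩

theorem exists_toSet_swap (hinvc : Continuous inv) (d : EntourageData inv) :
    ∃ d' : EntourageData inv, ∀ y y', (y, y') ∈ d'.toSet → (y', y) ∈ d.toSet := by
  refine ⟨{ d with
    nhd := fun β => d.nhd β ∩ inv ⁻¹' d.nhd β
    nhd_mem := fun β hβ => inter_mem (d.nhd_mem β hβ)
      (hinvc.continuousAt.preimage_mem_nhds (by rw [h.inv_eq_self hβ]; exact d.nhd_mem β hβ)) },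
    fun y y' hyy => ?_⟩
  rcases mem_toSet.1 hyy with ⟨hy, hy'⟩ | ⟨hA, hcell, -, hnhd⟩
  · exact Or.inl ⟨hy', hy⟩
  · refine mem_toSet.2 (Or.inr ⟨hcell.2 ▸ hA, ⟨hcell.1.symm, hcell.2.symm⟩, ?_⟩)
    rw [Set.mem_preimage, h.inv_mul_rev, h.inv_inv] at hnhd
    rwa [hcell.2]

theorem exists_toSet_comp [ContinuousMul S] (d : EntourageData inv) :
    ∃ d' : EntourageData inv,
      ∀ x y z, (x, y) ∈ d'.toSet → (y, z) ∈ d'.toSet → (x, z) ∈ d.toSet := by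
  obtain ⟨V, hV⟩ := d.exists_nhd_mul_subset
  let d' : EntourageData inv := { d with nhd := V, nhd_mem := fun β hβ => (hV β hβ).1 }
  refine ⟨d', fun x y z hxy hyz => mem_toSet.2 ?_⟩
  by_cases hx : inv x * x ∈ d.A
  · obtain ⟨hy, hxy⟩ := mem_cell_of_mem_toSet hxy hx
    obtain ⟨hz, hyz⟩ := mem_cell_of_mem_toSet hyz (hy.2 ▸ hx)
    refine Or.inr ⟨hx, ⟨hz.1.trans hy.1, hz.2.trans hy.2⟩, ?_⟩
    rw [← h.mul_inv_mul_eq_of_mem_cell ⟨rfl, rfl⟩ hz, ← mul_assoc]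
    rw [hy.2] at hyz
    exact (hV _ (d.isDClosed.isIdempotentElem _ hx)).2 _ hxy _ hyz
  · have hy : y ∈ idealAvoiding inv d'.A := mem_idealAvoiding_of_mem_toSet hxy hx
    have hz : z ∈ idealAvoiding inv d'.A := mem_idealAvoiding_of_mem_toSet hyz hy
    exact Or.inl ⟨hx, hz⟩

variable [T1Space S] [ContinuousMul S]

theorem setOf_mem_toSet_mem_nhds (hinvc : Continuous inv) (hp : IsPrimitiveSemigroup S)
    (d : EntourageData inv) (x : S) : {y | (x, y) ∈ d.toSet} ∈ 𝓝 x := by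
  by_cases hx : inv x * x ∈ d.A
  · have hx₀ : x ≠ 0 := d.isDClosed.ne_zero_of_inv_mul_mem hx
    have hnhd : ∀ᶠ y in 𝓝 x, inv x * y ∈ d.nhd (inv x * x) :=
      (continuous_const_mul (inv x)).continuousAt.eventually_mem
        (d.nhd_mem _ (h.isIdempotentElem_inv_mul x))
    filter_upwards [eventually_mem_cell h hp hx₀, hnhd] with y hy hy'
    exact Or.inr ⟨hx, hy, hy'⟩
  · filter_upwards [(isOpen_idealAvoiding hinvc d.finite).mem_nhds hx] with y hy
    exact Or.inl ⟨hx, hy⟩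

variable [CountablyCompactSpace S]

theorem exists_setOf_mem_toSet_subset (hinvc : Continuous inv) (hp : IsPrimitiveSemigroup S)
    {x : S} {N : Set S} (hN : N ∈ 𝓝 x) :
    ∃ d : EntourageData inv, {y | (x, y) ∈ d.toSet} ⊆ N := by
  classical
  rcases eq_or_ne x 0 with rfl | hx
  · obtain ⟨A, ⟨hAf, hA⟩, hAN⟩ := (hasBasis_nhds_zero hinvc h hp).mem_iff.1 hN
    exact ⟨⟨A, hAf, hA, fun _ => Set.univ, fun _ _ => univ_mem⟩,
      fun y hy => hAN (mem_idealAvoiding_of_mem_toSet hy (zero_mem_idealAvoiding hA))⟩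
  have hxA : inv x * x ∈ dSaturation inv {x} := inv_mul_mem_dSaturation h rfl hx
  refine ⟨⟨dSaturation inv {x}, finite_dSaturation hinvc h hp (Set.finite_singleton x),
      isDClosed_dSaturation h hp {x},
      Function.update (fun _ => Set.univ) (inv x * x) ((x * ·) ⁻¹' N), fun β _ => ?_⟩, ?_⟩
  · rcases eq_or_ne β (inv x * x) with rfl | hβ
    · rw [Function.update_self]
      exact (continuous_const_mul x).continuousAt.preimage_mem_nhds
        (by rwa [← mul_assoc, h.mul_inv_mul])
    · rw [Function.update_of_ne hβ]
      exact univ_mem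
  · intro y hy
    obtain ⟨hcell, hxy⟩ := mem_cell_of_mem_toSet hy hxA
    have hxy' : x * (inv x * y) ∈ N := by simpa using hxy
    rwa [h.mul_inv_mul_eq_of_mem_cell ⟨rfl, rfl⟩ hcell] at hxy'

theorem exists_finite_forall_exists_mem_toSet (hinvc : Continuous inv) (d : EntourageData inv) :
    ∃ t : Set S, t.Finite ∧ ∀ y, ∃ g ∈ t, (y, g) ∈ d.toSet := by
  have hmem : ∀ β ∈ d.A, inv ⁻¹' d.nhd β ∈ 𝓝 β := fun β hβ => by
    have hβ' := d.isDClosed.isIdempotentElem β hβ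
    exact hinvc.continuousAt.preimage_mem_nhds (by rw [h.inv_eq_self hβ']; exact d.nhd_mem β hβ')
  choose! net hnet using fun α β (hβ : β ∈ d.A) => exists_finite_cover_cell hinvc α (hmem β hβ)
  refine ⟨insert 0 (⋃ α ∈ d.A, ⋃ β ∈ d.A, net α β),
    (d.finite.biUnion fun α _ => d.finite.biUnion fun β hβ => (hnet α β hβ).1).insert 0,
    fun y => ?_⟩
  by_cases hy : inv y * y ∈ d.A
  · have hyr := d.isDClosed.mul_inv_mem y hy
    obtain ⟨-, hsub, hcov⟩ := hnet (y * inv y) (inv y * y) hy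
    obtain ⟨g, hg, hgy⟩ := hcov y ⟨rfl, rfl⟩
    have hgc := hsub hg
    rw [Set.mem_preimage, h.inv_mul_rev, h.inv_inv] at hgy
    exact ⟨g, Set.mem_insert_of_mem _ (Set.mem_biUnion hyr (Set.mem_biUnion hy hg)),
      Or.inr ⟨hy, hgc, hgy⟩⟩
  · exact ⟨0, Set.mem_insert 0 _, Or.inl ⟨hy, zero_mem_idealAvoiding d.isDClosed⟩⟩

theorem exists_toSet_mul (hinvc : Continuous inv) (hp : IsPrimitiveSemigroup S)
    (d : EntourageData inv) : ∃ d' : EntourageData inv, ∀ y y' z z',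
      (y, y') ∈ d'.toSet → (z, z') ∈ d'.toSet → (y * z, y' * z') ∈ d.toSet := by
  obtain ⟨V, hV⟩ := d.exists_nhd_mul_subset
  let W : S → Set S := fun β => V β ∩ {g | ∀ δ ∈ d.A, ∀ z ∈ cell inv β δ, inv z * (g * z) ∈ V δ}
  have hW : ∀ β, IsIdempotentElem β → W β ∈ 𝓝 β := fun β hβ =>
    inter_mem (hV β hβ).1 <| d.finite.eventually_all.2 fun δ hδ =>
      have hδ' := d.isDClosed.isIdempotentElem δ hδ
      eventually_forall_mem_cell_conj_mem hinvc h hδ' (hV δ hδ').1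
  let d' : EntourageData inv := { d with nhd := W, nhd_mem := hW }
  refine ⟨d', fun y y' z z' hyy hzz => ?_⟩
  rcases mem_toSet.1 hyy with ⟨hy, hy'⟩ | ⟨hyA, hy', hg⟩
  · exact Or.inl ⟨mul_mem_idealAvoiding_right h hp d.isDClosed hy z,
      mul_mem_idealAvoiding_right h hp d.isDClosed hy' z'⟩
  rcases mem_toSet.1 hzz with ⟨hz, hz'⟩ | ⟨hzA, hz', hk⟩
  · exact Or.inl ⟨mul_mem_idealAvoiding_left h hp d.isDClosed y hz,
      mul_mem_idealAvoiding_left h hp d.isDClosed y' hz'⟩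
  have hy₀ := d.isDClosed.ne_zero_of_inv_mul_mem hyA
  have hz₀ := d.isDClosed.ne_zero_of_inv_mul_mem hzA
  have hy'₀ := d.isDClosed.ne_zero_of_inv_mul_mem (hy'.2 ▸ hyA)
  have hz'₀ := d.isDClosed.ne_zero_of_inv_mul_mem (hz'.2 ▸ hzA)
  by_cases hyz : inv y * y = z * inv z
  · have h₁ : y * z ≠ 0 := (h.mul_ne_zero_iff hp hy₀ hz₀).2 hyz
    have h₂ : y' * z' ≠ 0 := (h.mul_ne_zero_iff hp hy'₀ hz'₀).2 (by rw [hy'.2, hz'.1, hyz])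
    refine Or.inr ⟨by rwa [h.inv_mul_mul_eq hp h₁],
      ⟨by rw [h.mul_mul_inv_eq hp h₂, h.mul_mul_inv_eq hp h₁, hy'.1],
        by rw [h.inv_mul_mul_eq hp h₂, h.inv_mul_mul_eq hp h₁, hz'.2]⟩, ?_⟩
    have hconj : inv (y * z) * (y' * z') = inv z * ((inv y * y') * z) * (inv z * z') := by
      conv_lhs => rw [← h.mul_inv_mul_eq_of_mem_cell ⟨rfl, rfl⟩ hz', h.inv_mul_rev]
      simp only [mul_assoc]
    rw [h.inv_mul_mul_eq hp h₁, hconj]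
    exact (hV _ (d.isDClosed.isIdempotentElem _ hzA)).2 _ (hg.2 _ hzA z ⟨hyz.symm, rfl⟩) _ hk.1
  · have h₁ : y * z = 0 := not_not.1 (mt (h.mul_ne_zero_iff hp hy₀ hz₀).1 hyz)
    have h₂ : y' * z' = 0 :=
      not_not.1 (mt (h.mul_ne_zero_iff hp hy'₀ hz'₀).1 (by rwa [hy'.2, hz'.1]))
    rw [h₁, h₂]
    exact mem_toSet_self h d 0

theorem exists_toSet_inv (hinvc : Continuous inv) (d : EntourageData inv) :
    ∃ d' : EntourageData inv, ∀ y y', (y, y') ∈ d'.toSet → (inv y, inv y') ∈ d.toSet := by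
  let W : S → Set S := fun β => {g | ∀ α ∈ d.A, ∀ z ∈ cell inv β α, inv z * (inv g * z) ∈ d.nhd α}
  have hW : ∀ β, IsIdempotentElem β → W β ∈ 𝓝 β := fun β hβ => by
    have hinvβ : Tendsto inv (𝓝 β) (𝓝 β) := by simpa [h.inv_eq_self hβ] using hinvc.tendsto β
    refine d.finite.eventually_all.2 fun α hα =>
      hinvβ.eventually (p := fun g => ∀ z ∈ cell inv β α, inv z * (g * z) ∈ d.nhd α) ?_
    have hα' := d.isDClosed.isIdempotentElem α hα
    exact eventually_forall_mem_cell_conj_mem hinvc h hα' (d.nhd_mem α hα')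
  let d' : EntourageData inv := { d with nhd := W, nhd_mem := hW }
  refine ⟨d', fun y y' hyy => ?_⟩
  rcases mem_toSet.1 hyy with ⟨hy, hy'⟩ | ⟨hyA, hy', hg⟩
  · exact Or.inl ⟨inv_mem_idealAvoiding h d.isDClosed hy, inv_mem_idealAvoiding h d.isDClosed hy'⟩
  have hyr : y * inv y ∈ d.A := d.isDClosed.mul_inv_mem y hyA
  refine Or.inr ⟨by rwa [h.inv_inv], ⟨by rw [h.inv_inv, h.inv_inv, hy'.2],
    by rw [h.inv_inv, h.inv_inv, hy'.1]⟩, ?_⟩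
  have hconj : inv (inv y) * inv y' = inv (inv y) * (inv (inv y * y') * inv y) := by
    rw [h.inv_mul_rev, h.inv_inv, mul_assoc (inv y'), ← hy'.1, ← mul_assoc (inv y'), h.inv_mul_inv]
  have := hg _ hyr (inv y) ⟨by rw [h.inv_inv], by rw [h.inv_inv]⟩
  change inv (inv y) * inv y' ∈ d.nhd (inv (inv y) * inv y)
  rw [hconj, h.inv_inv]
  rwa [h.inv_inv] at this

end EntourageData

variable [T1Space S] [ContinuousMul S] [CountablyCompactSpace S]

abbrev cellUniformity (hinvc : Continuous inv) (h : InvSgrp inv) (hp : IsPrimitiveSemigroup S) :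
    UniformSpace S where
  toTopologicalSpace := ‹_›
  uniformity := ⨅ d : EntourageData inv, 𝓟 d.toSet
  symm := (EntourageData.hasBasis_iInf_toSet.tendsto_iff EntourageData.hasBasis_iInf_toSet).2
    fun d _ =>
      let ⟨d', hd'⟩ := d.exists_toSet_swap h hinvc
      ⟨d', trivial, fun p hpd => hd' p.1 p.2 hpd⟩
  comp := ((EntourageData.hasBasis_iInf_toSet.lift' (monotone_id.relComp monotone_id)).le_basis_iff
    EntourageData.hasBasis_iInf_toSet).2 fun d _ =>
      let ⟨d', hd'⟩ := d.exists_toSet_comp h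
      ⟨d', trivial, fun ⟨x, z⟩ ⟨y, hxy, hyz⟩ => hd' x y z hxy hyz⟩
  nhds_eq_comap_uniformity x := by
    have hb := (EntourageData.hasBasis_iInf_toSet (inv := inv)).comap (Prod.mk x)
    refine le_antisymm (hb.ge_iff.2 fun d _ => d.setOf_mem_toSet_mem_nhds h hinvc hp x)
      (hb.le_iff.2 fun N hN => ?_)
    obtain ⟨d, hd⟩ := EntourageData.exists_setOf_mem_toSet_subset h hinvc hp hN
    exact ⟨d, trivial, hd⟩

variable (hinvc : Continuous inv) (h : InvSgrp inv) (hp : IsPrimitiveSemigroup S)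

theorem hasBasis_cellUniformity :
    𝓤[cellUniformity hinvc h hp].HasBasis (fun _ => True) (EntourageData.toSet (inv := inv)) :=
  EntourageData.hasBasis_iInf_toSet

theorem totallyBounded_cellUniformity :
    letI := cellUniformity hinvc h hp
    TotallyBounded (Set.univ : Set S) := by
  let _ := cellUniformity hinvc h hp
  refine (hasBasis_cellUniformity hinvc h hp).totallyBounded_iff.2 fun d _ => ?_
  obtain ⟨t, ht, hcov⟩ := d.exists_finite_forall_exists_mem_toSet h hinvc
  exact ⟨t, ht, fun y _ => let ⟨g, hg, hyg⟩ := hcov y; Set.mem_iUnion₂.2 ⟨g, hg, hyg⟩⟩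

theorem uniformContinuous_mul_cellUniformity :
    letI := cellUniformity hinvc h hp
    UniformContinuous fun p : S × S => p.1 * p.2 := by
  let _ := cellUniformity hinvc h hp
  have hb := hasBasis_cellUniformity hinvc h hp
  refine ((hb.uniformity_prod hb).uniformContinuous_iff hb).2 fun d _ => ?_
  obtain ⟨d', hd'⟩ := d.exists_toSet_mul h hinvc hp
  exact ⟨(d', d'), ⟨trivial, trivial⟩, fun p q hpq => hd' _ _ _ _ hpq.1 hpq.2⟩

theorem uniformContinuous_inv_cellUniformity :
    letI := cellUniformity hinvc h hp
    UniformContinuous inv := by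
  let _ := cellUniformity hinvc h hp
  have hb := hasBasis_cellUniformity hinvc h hp
  refine (hb.uniformContinuous_iff hb).2 fun d _ => ?_
  obtain ⟨d', hd'⟩ := d.exists_toSet_inv h hinvc
  exact ⟨d', trivial, hd'⟩

end Uniformity

section DenseImage

variable {S T : Type*} [SemigroupWithZero S] {inv : S → S} {q : S → T}

theorem exists_mem_closure_image_cell [TopologicalSpace T] (hqd : DenseRange q) {A : Set S}
    (hAf : A.Finite) (hA : IsDClosed inv A) {x : T}
    (hx : x ∉ closure (q '' idealAvoiding inv A)) :
    ∃ α ∈ A, ∃ β ∈ A, x ∈ closure (q '' cell inv α β) := by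
  have hx' : x ∈ closure (q '' Set.univ) := by rw [Set.image_univ, hqd.closure_range]; trivial
  rw [← hA.idealAvoiding_union_iUnion_cell] at hx'
  simp only [Set.image_union, Set.image_iUnion₂, closure_union, hAf.closure_biUnion,
    Set.mem_union, Set.mem_iUnion₂] at hx'
  obtain ⟨α, hα, β, hβ, hxc⟩ := hx'.resolve_left hx
  exact ⟨α, hα, β, hβ, hxc⟩

variable [SemigroupWithZero T] (hq_mul : ∀ a b, q (a * b) = q a * q b)
include hq_mul

theorem mul_self_eq_zero_of_mem_closure_image_cell [TopologicalSpace T] [T1Space T]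
    [ContinuousMul T] (h : InvSgrp inv) (hp : IsPrimitiveSemigroup S) (hq₀ : q 0 = 0)
    {α β : S} (hα : α ≠ 0) (hαβ : α ≠ β) {x : T} (hx : x ∈ closure (q '' cell inv α β)) :
    x * x = 0 := by
  have hzero : ∀ a ∈ cell inv α β, ∀ b ∈ cell inv α β, q a * q b = 0 := by
    intro a ha b hb
    have hab : a * b = 0 := by
      by_contra hab
      have ha₀ : a ≠ 0 := by rintro rfl; exact hα (by rw [← ha.1, zero_mul])
      have hb₀ : b ≠ 0 := by rintro rfl; exact hα (by rw [← hb.1, zero_mul])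
      exact hαβ (hb.1.symm.trans (((h.mul_ne_zero_iff hp ha₀ hb₀).1 hab).symm.trans ha.2))
    rw [← hq_mul, hab, hq₀]
  have hsub : (q '' cell inv α β) ×ˢ (q '' cell inv α β) ⊆
      (fun p : T × T => p.1 * p.2) ⁻¹' {0} := by
    rintro ⟨_, _⟩ ⟨⟨a, ha, rfl⟩, ⟨b, hb, rfl⟩⟩
    exact hzero a ha b hb
  have hx₂ : (x, x) ∈ closure ((q '' cell inv α β) ×ˢ (q '' cell inv α β)) := by
    rw [closure_prod_eq]; exact ⟨hx, hx⟩
  exact closure_minimal hsub (isClosed_singleton.preimage continuous_mul) hx₂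

theorem eq_of_mem_closure_image_cell [TopologicalSpace T] [T2Space T] [ContinuousMul T]
    (h : InvSgrp inv) {invT : T → T} (hinvT : Continuous invT)
    (hq_inv : ∀ a, q (inv a) = invT (q a)) {β : S} {x : T} (hx : x ∈ closure (q '' cell inv β β))
    (hxx : IsIdempotentElem x) : x = q β := by
  have hcl : closure (q '' cell inv β β) ⊆ {v | v * q β = v ∧ v * invT v = q β} := by
    refine closure_minimal ?_ ((isClosed_eq (by fun_prop) continuous_id).inter
      (isClosed_eq (by fun_prop) continuous_const))
    rintro _ ⟨a, ha, rfl⟩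
    exact ⟨by rw [← hq_mul, ← ha.2, ← mul_assoc, h.mul_inv_mul],
      by rw [← hq_inv, ← hq_mul, ha.1]⟩
  obtain ⟨h₁, h₂⟩ := hcl hx
  calc x = x * (x * invT x) := by rw [h₂, h₁]
    _ = q β := by rw [← mul_assoc, hxx.eq, h₂]

theorem exists_isIdempotentElem_eq_of_denseRange [TopologicalSpace S] [T1Space S]
    [ContinuousMul S] [CountablyCompactSpace S] (hinvc : Continuous inv) (h : InvSgrp inv)
    (hp : IsPrimitiveSemigroup S) [TopologicalSpace T] [T2Space T] [ContinuousMul T]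
    {invT : T → T} (hinvT : Continuous invT) (hq : Continuous q) (hqd : DenseRange q)
    (hq₀ : q 0 = 0) (hq_inv : ∀ a, q (inv a) = invT (q a)) {x : T} (hx₀ : x ≠ 0)
    (hx : IsIdempotentElem x) : ∃ e, IsIdempotentElem e ∧ q e = x := by
  obtain ⟨A, ⟨hAf, hA⟩, hxA⟩ :
      ∃ A, (A.Finite ∧ IsDClosed inv A) ∧ x ∉ closure (q '' idealAvoiding inv A) := by
    by_contra! hall
    exact hx₀ ((eq_of_forall_mem_closure_image (hasBasis_nhds_zero hinvc h hp) hq.continuousAt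
      hall).trans hq₀)
  obtain ⟨α, hα, β, hβ, hxc⟩ := exists_mem_closure_image_cell hqd hAf hA hxA
  rcases eq_or_ne α β with rfl | hαβ
  · exact ⟨α, hA.isIdempotentElem α hα,
      (eq_of_mem_closure_image_cell hq_mul h hinvT hq_inv hxc hx).symm⟩
  · exact absurd (hx.eq.symm.trans (mul_self_eq_zero_of_mem_closure_image_cell hq_mul h hp hq₀
      (hA.ne_zero_of_mem hα) hαβ hxc)) hx₀

end DenseImage

end InvSgrp

section Transfer

variable {S T : Type*} [SemigroupWithZero S] [SemigroupWithZero T] {q : S → T}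
  (hq_mul : ∀ a b, q (a * b) = q a * q b)
  (hlift : ∀ x : T, x ≠ 0 → IsIdempotentElem x → ∃ e, IsIdempotentElem e ∧ q e = x)
include hq_mul hlift

theorem IsPrimitiveSemigroup.of_exists_eq (hq : Function.Injective q) (hq₀ : q 0 = 0)
    (hS : IsPrimitiveSemigroup S) : IsPrimitiveSemigroup T := by
  intro e he₀ he f hf₀ hf hef hfe
  obtain ⟨e, he', rfl⟩ := hlift e he₀ he
  obtain ⟨f, hf', rfl⟩ := hlift f hf₀ hf
  rw [← hq_mul] at hef hfe
  exact congrArg q (hS e (by rintro rfl; exact he₀ hq₀) he' f (by rintro rfl; exact hf₀ hq₀) hf'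
    (hq hef) (hq hfe))

theorem commute_of_exists_eq (hS : ∀ e f : S, IsIdempotentElem e → IsIdempotentElem f → Commute e f)
    (x y : T) (hx : IsIdempotentElem x) (hy : IsIdempotentElem y) : Commute x y := by
  rcases eq_or_ne x 0 with rfl | hx₀
  · exact Commute.zero_left y
  rcases eq_or_ne y 0 with rfl | hy₀
  · exact Commute.zero_right x
  obtain ⟨e, he, rfl⟩ := hlift x hx₀ hx
  obtain ⟨f, hf, rfl⟩ := hlift y hy₀ hy
  rw [Commute, SemiconjBy, ← hq_mul, ← hq_mul, (hS e f he hf).eq]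

end Transfer

class UniformContinuousMul (α : Type*) [UniformSpace α] [Mul α] : Prop where
  uniformContinuous_mul : UniformContinuous fun p : α × α => p.1 * p.2

namespace UniformSpace.Completion

variable {α : Type*} [UniformSpace α]

section Mul

variable [Mul α] [UniformContinuousMul α]

-- Mathlib's multiplication on `Completion α` is only defined for rings.
noncomputable instance : Mul (Completion α) := ⟨Completion.map₂ (· * ·)⟩

theorem coe_mul' (a b : α) : ((a * b : α) : Completion α) = a * b :=
  (Completion.map₂_coe_coe a b _ UniformContinuousMul.uniformContinuous_mul).symm

instance : ContinuousMul (Completion α) :=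
  ⟨Completion.continuous_map₂ continuous_fst continuous_snd⟩

end Mul

noncomputable instance [Semigroup α] [UniformContinuousMul α] : Semigroup (Completion α) where
  mul_assoc a b c := induction_on₃ a b c (isClosed_eq (by fun_prop) (by fun_prop))
    fun a b c => by simp only [← coe_mul', mul_assoc]

noncomputable instance [SemigroupWithZero α] [UniformContinuousMul α] :
    SemigroupWithZero (Completion α) where
  zero_mul a := induction_on a (isClosed_eq (by fun_prop) continuous_const)
    fun a => by rw [← coe_zero, ← coe_mul', zero_mul]
  mul_zero a := induction_on a (isClosed_eq (by fun_prop) continuous_const)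
    fun a => by rw [← coe_zero, ← coe_mul', mul_zero]

section Regular

variable [Semigroup α] [UniformContinuousMul α] {f : α → α} (hf : UniformContinuous f)
include hf

theorem mul_map_mul (h : ∀ a, a * f a * a = a) (x : Completion α) :
    x * Completion.map f x * x = x :=
  induction_on x (isClosed_eq (by fun_prop) continuous_id)
    fun a => by rw [map_coe hf, ← coe_mul', ← coe_mul', h]

theorem map_mul_map (h : ∀ a, f a * a * f a = f a) (x : Completion α) :
    Completion.map f x * x * Completion.map f x = Completion.map f x :=
  induction_on x (isClosed_eq (by fun_prop) continuous_map)
    fun a => by rw [map_coe hf, ← coe_mul', ← coe_mul', h]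

end Regular

theorem compactSpace_of_totallyBounded (h : TotallyBounded (Set.univ : Set α)) :
    CompactSpace (Completion α) := by
  rw [← isCompact_univ_iff, isCompact_iff_totallyBounded_isComplete, ← denseRange_coe.closure_range,
    ← Set.image_univ]
  exact ⟨(h.image (uniformContinuous_coe α)).closure, isClosed_closure.isComplete⟩

end UniformSpace.Completion

open InvSgrp

/-- Every primitive countably compact Hausdorff topological inverse
semigroup `S` embeds as a dense topological inverse subsemigroup into a primitive
compact Hausdorff topological inverse semigroup `T`. -/
theorem stmt_10 {S : Type u} [SemigroupWithZero S] [TopologicalSpace S] [T2Space S]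
    [ContinuousMul S] [Nontrivial S]
    (inv : S → S) (hinvc : Continuous inv) (hinv : InvSgrp inv)
    (hcc : CountablyCompact S)
    (hprim : ∀ e : S, e ≠ 0 → e * e = e →
      ∀ f : S, f ≠ 0 → f * f = f → e * f = f → f * e = f → f = e) :
    ∃ (T : Type u) (tT : TopologicalSpace T) (mT : SemigroupWithZero T)
      (invT : T → T),
      letI := tT; letI := mT;
      T2Space T ∧ CompactSpace T ∧ ContinuousMul T ∧ Continuous invT ∧
      InvSgrp invT ∧ Nontrivial T ∧
      (∀ e : T, e ≠ 0 → e * e = e →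
        ∀ f : T, f ≠ 0 → f * f = f → e * f = f → f * e = f → f = e) ∧
      ∃ emb : S → T, Topology.IsEmbedding emb ∧ DenseRange emb ∧
        (∀ x y : S, emb (x * y) = emb x * emb y) ∧ emb 0 = 0 ∧
        ∀ x : S, emb (inv x) = invT (emb x) := by
  have := hcc.countablyCompactSpace
  let _ := cellUniformity hinvc hinv hprim
  have : UniformContinuousMul S := ⟨uniformContinuous_mul_cellUniformity hinvc hinv hprim⟩
  have hinvu : UniformContinuous inv := uniformContinuous_inv_cellUniformity hinvc hinv hprim
  have hcoe_inv (a : S) : ((inv a : S) : Completion S) = Completion.map inv a :=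
    (Completion.map_coe hinvu a).symm
  have hlift (x : Completion S) (hx₀ : x ≠ 0) (hx : IsIdempotentElem x) :
      ∃ e : S, IsIdempotentElem e ∧ (e : Completion S) = x :=
    exists_isIdempotentElem_eq_of_denseRange Completion.coe_mul' hinvc hinv hprim
      Completion.continuous_map (Completion.continuous_coe S) Completion.denseRange_coe rfl
      hcoe_inv hx₀ hx
  refine ⟨Completion S, inferInstance, inferInstance, Completion.map inv, inferInstance,
    Completion.compactSpace_of_totallyBounded (totallyBounded_cellUniformity hinvc hinv hprim),
    inferInstance, Completion.continuous_map,
    InvSgrp.of_commute (Completion.mul_map_mul hinvu hinv.mul_inv_mul)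
      (Completion.map_mul_map hinvu hinv.inv_mul_inv)
      (commute_of_exists_eq Completion.coe_mul' hlift fun _ _ => hinv.commute_of_isIdempotentElem),
    (Completion.coe_injective S).nontrivial,
    IsPrimitiveSemigroup.of_exists_eq Completion.coe_mul' hlift (Completion.coe_injective S) rfl
      hprim,
    (↑), (Completion.isUniformEmbedding_coe S).isEmbedding, Completion.denseRange_coe,
    Completion.coe_mul', rfl, hcoe_inv⟩
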